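/- arXiv:1709.07744 — 2 statements merged into one kernel-verified Lean document; each statement's English description precedes it below -/
import Mathlib

section
/- (Existence part of Sklar's theorem, Theorem 1.) Let ℓ ≥ 1 and let S : Ω → (Fin ℓ → ℝ) be a random vector on a probability space (Ω, P) such that each marginal cdf F_l(t) = P(S_l ≤ t) is continuous. Define C : (Fin ℓ → ℝ) → ℝ by C(u) = P(∀ l, F_l(S_l) ≤ u_l). Then for every s ∈ ℝ^ℓ, the joint cdf satisfies P(∀ l, S_l ≤ s_l) = C(F_1(s_1), …, F_ℓ(s_ℓ)). -/
open MeasureTheory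

/-- Existence part of Sklar's theorem: the joint cdf of a random vector with
continuous marginal cdfs `F l` equals the copula `C` (the joint cdf of
`(F l (S l))_l`) evaluated at the marginal cdfs. -/
theorem sklar_existence
    {Ω : Type*} [MeasurableSpace Ω] (P : Measure Ω) [IsProbabilityMeasure P]
    (ℓ : ℕ) (hℓ : 1 ≤ ℓ)
    (S : Ω → Fin ℓ → ℝ) (hS : Measurable S)
    (F : Fin ℓ → ℝ → ℝ)
    (hF : ∀ l t, F l t = (P {ω | S ω l ≤ t}).toReal)
    (hFcont : ∀ l, Continuous (F l))
    (C : (Fin ℓ → ℝ) → ℝ)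
    (hC : ∀ u : Fin ℓ → ℝ, C u = (P {ω | ∀ l, F l (S ω l) ≤ u l}).toReal) :
    ∀ s : Fin ℓ → ℝ,
      (P {ω | ∀ l, S ω l ≤ s l}).toReal = C (fun l => F l (s l)) := by
  intro s
  have hSl : ∀ l, Measurable fun ω => S ω l := fun l => (measurable_pi_apply l).comp hS
  have hmes : ∀ (l) (t : ℝ), MeasurableSet {ω | S ω l ≤ t} := fun l t =>
    (hSl l) measurableSet_Iic
  have hmono : ∀ l, Monotone (F l) := by
    intro l a b hab
    rw [hF, hF]
    exact ENNReal.toReal_mono (measure_ne_top P _)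
      (measure_mono fun ω h => le_trans h hab)
  -- key: strips where F is constant are null
  have key : ∀ (l) (t : ℝ), s l ≤ t → F l t = F l (s l) →
      P {ω | s l < S ω l ∧ S ω l ≤ t} = 0 := by
    intro l t hst hFt
    have hsub : {ω | s l < S ω l ∧ S ω l ≤ t}
        = {ω | S ω l ≤ t} \ {ω | S ω l ≤ s l} := by
      ext ω; simp [Set.mem_setOf_eq, not_le, and_comm]
    have heq : P {ω | S ω l ≤ t} = P {ω | S ω l ≤ s l} := by
      have h := hFt
      rw [hF, hF] at h
      exact (ENNReal.toReal_eq_toReal_iff' (measure_ne_top P _) (measure_ne_top P _)).mp h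
    rw [hsub, measure_diff (s₁ := {ω | S ω l ≤ t}) (s₂ := {ω | S ω l ≤ s l})
      (fun ω (h : S ω l ≤ s l) => le_trans h hst)
      ((hmes l (s l)).nullMeasurableSet) (measure_ne_top P _), heq, tsub_self]
  have hN : ∀ l, P {ω | s l < S ω l ∧ F l (S ω l) ≤ F l (s l)} = 0 := by
    intro l
    set T : Set ℝ := {t | s l ≤ t} ∩ {t | F l t = F l (s l)} with hTdef
    have hsT : s l ∈ T := Set.mem_inter (Set.mem_setOf_eq ▸ le_rfl) rfl
    by_cases hbdd : BddAbove T
    · have hTclosed : IsClosed T :=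
        isClosed_Ici.inter (isClosed_singleton.preimage (hFcont l))
      have htstar : sSup T ∈ T := hTclosed.csSup_mem ⟨s l, hsT⟩ hbdd
      have hsub : {ω | s l < S ω l ∧ F l (S ω l) ≤ F l (s l)}
          ⊆ {ω | s l < S ω l ∧ S ω l ≤ sSup T} := by
        intro ω ⟨h1, h2⟩
        have hmem : S ω l ∈ T :=
          ⟨le_of_lt h1, le_antisymm h2 (hmono l (le_of_lt h1))⟩
        exact ⟨h1, le_csSup hbdd hmem⟩
      exact measure_mono_null hsub (key l (sSup T) htstar.1 htstar.2)
    · -- F is eventually constant = F (s l), so P {S ≤ s l} = 1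
      have hone : (1 : ENNReal) ≤ P {ω | S ω l ≤ s l} := by
        have hle : ∀ n : ℕ, P {ω | S ω l ≤ (n : ℝ)} ≤ P {ω | S ω l ≤ s l} := by
          intro n
          obtain ⟨t, htT, hnt⟩ := not_bddAbove_iff.mp hbdd (n : ℝ)
          have heq : P {ω | S ω l ≤ t} = P {ω | S ω l ≤ s l} := by
            have h : F l t = F l (s l) := htT.2
            rw [hF l t, hF l (s l)] at h
            exact (ENNReal.toReal_eq_toReal_iff' (measure_ne_top P _)
              (measure_ne_top P _)).mp h
          calc P {ω | S ω l ≤ (n : ℝ)} ≤ P {ω | S ω l ≤ t} :=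
                measure_mono fun ω h => le_trans h (le_of_lt hnt)
            _ = P {ω | S ω l ≤ s l} := heq
        have htend : Filter.Tendsto (fun n : ℕ => P {ω | S ω l ≤ (n : ℝ)})
            Filter.atTop (nhds (P (⋃ n : ℕ, {ω | S ω l ≤ (n : ℝ)}))) := by
          apply tendsto_measure_iUnion_atTop
          intro m n hmn ω h
          simp only [Set.mem_setOf_eq] at h ⊢
          exact le_trans h (by exact_mod_cast hmn)
        have huniv : (⋃ n : ℕ, {ω | S ω l ≤ (n : ℝ)}) = Set.univ := by
          ext ω
          simp only [Set.mem_iUnion, Set.mem_setOf_eq, Set.mem_univ, iff_true]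
          obtain ⟨n, hn⟩ := exists_nat_ge (S ω l)
          exact ⟨n, hn⟩
        rw [huniv, measure_univ] at htend
        exact le_of_tendsto' htend hle
      have hcompl : P {ω | s l < S ω l} = 0 := by
        have : {ω | s l < S ω l} = {ω | S ω l ≤ s l}ᶜ := by
          ext ω; simp [not_le]
        rw [this, measure_compl (hmes l (s l)) (measure_ne_top P _), measure_univ,
          le_antisymm prob_le_one hone, tsub_self]
      exact measure_mono_null (fun ω h => h.1) hcompl
  -- conclude
  have hAB : {ω | ∀ l, S ω l ≤ s l} ⊆ {ω | ∀ l, F l (S ω l) ≤ F l (s l)} :=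
    fun ω h l => hmono l (h l)
  have hdiff : P ({ω | ∀ l, F l (S ω l) ≤ F l (s l)} \ {ω | ∀ l, S ω l ≤ s l}) = 0 := by
    apply measure_mono_null (t := ⋃ l, {ω | s l < S ω l ∧ F l (S ω l) ≤ F l (s l)})
    · rintro ω ⟨hB, hA⟩
      simp only [Set.mem_setOf_eq, not_forall, not_le] at hA
      obtain ⟨l, hl⟩ := hA
      exact Set.mem_iUnion.mpr ⟨l, hl, hB l⟩
    · exact measure_iUnion_null hN
  have hPeq : P {ω | ∀ l, S ω l ≤ s l} = P {ω | ∀ l, F l (S ω l) ≤ F l (s l)} := by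
    refine le_antisymm (measure_mono hAB) ?_
    calc P {ω | ∀ l, F l (S ω l) ≤ F l (s l)}
        ≤ P ({ω | ∀ l, S ω l ≤ s l}
            ∪ ({ω | ∀ l, F l (S ω l) ≤ F l (s l)} \ {ω | ∀ l, S ω l ≤ s l})) :=
          measure_mono fun ω h => by
            by_cases hA : ω ∈ {ω | ∀ l, S ω l ≤ s l}
            · exact Or.inl hA
            · exact Or.inr ⟨h, hA⟩
      _ ≤ P {ω | ∀ l, S ω l ≤ s l}
            + P ({ω | ∀ l, F l (S ω l) ≤ F l (s l)} \ {ω | ∀ l, S ω l ≤ s l}) :=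
          measure_union_le _ _
      _ = P {ω | ∀ l, S ω l ≤ s l} := by rw [hdiff, add_zero]
  rw [hC, hPeq]
end

section
/- (Uniqueness part of Sklar's theorem, Theorem 1.) Let ℓ ≥ 1 and let S : Ω → (Fin ℓ → ℝ) be a random vector on a probability space (Ω, P) such that each marginal cdf F_l(t) = P(S_l ≤ t) is continuous. If C₁, C₂ : (Fin ℓ → ℝ) → ℝ both satisfy P(∀ l, S_l ≤ s_l) = C_j(F_1(s_1), …, F_ℓ(s_ℓ)) for all s ∈ ℝ^ℓ (j = 1, 2), then C₁(u) = C₂(u) for every u with u_l ∈ (0,1) for all l. -/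
/-!
A continuous cdf takes every value in `(0,1)` (intermediate value theorem between its limits `0`
and `1`), so every `u ∈ (0,1)^ℓ` is of the form `(F_l (s_l))_l`; at such a point both `C₁` and
`C₂` equal the joint cdf at `s`.
-/

open MeasureTheory Filter Set Topology ProbabilityTheory

theorem Continuous.Ioo_subset_range_of_tendsto {X α : Type*} [TopologicalSpace X]
    [PreconnectedSpace X] [LinearOrder α] [TopologicalSpace α] [OrderTopology α] {f : X → α}
    (hf : Continuous f) {l₁ l₂ : Filter X} [l₁.NeBot] [l₂.NeBot] {a b : α}
    (ha : Tendsto f l₁ (𝓝 a)) (hb : Tendsto f l₂ (𝓝 b)) : Ioo a b ⊆ range f :=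
  fun _ hc => mem_range_of_exists_le_of_exists_ge hf
    ((ha.eventually (eventually_lt_nhds hc.1)).exists.imp fun _ => le_of_lt)
    ((hb.eventually (eventually_gt_nhds hc.2)).exists.imp fun _ => le_of_lt)

namespace ProbabilityTheory

theorem Ioo_subset_range_cdf (μ : Measure ℝ) [IsProbabilityMeasure μ] (h : Continuous (cdf μ)) :
    Ioo 0 1 ⊆ range (cdf μ) :=
  h.Ioo_subset_range_of_tendsto (tendsto_cdf_atBot μ) (tendsto_cdf_atTop μ)

theorem cdf_map_apply {Ω : Type*} [MeasurableSpace Ω] (P : Measure Ω) [IsProbabilityMeasure P]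
    {X : Ω → ℝ} (hX : AEMeasurable X P) (t : ℝ) :
    cdf (P.map X) t = (P {ω | X ω ≤ t}).toReal := by
  have := Measure.isProbabilityMeasure_map hX
  rw [cdf_eq_real, measureReal_def, Measure.map_apply_of_aemeasurable hX measurableSet_Iic]
  rfl

end ProbabilityTheory

theorem sklar_uniqueness_general
    {Ω : Type*} [MeasurableSpace Ω] (P : Measure Ω) [IsProbabilityMeasure P]
    (ℓ : ℕ)
    (S : Ω → Fin ℓ → ℝ) (hS : Measurable S)
    (F : Fin ℓ → ℝ → ℝ)
    (hF : ∀ l t, F l t = (P {ω | S ω l ≤ t}).toReal)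
    (hFcont : ∀ l, Continuous (F l))
    (C₁ C₂ : (Fin ℓ → ℝ) → ℝ)
    (h₁ : ∀ s : Fin ℓ → ℝ,
      (P {ω | ∀ l, S ω l ≤ s l}).toReal = C₁ (fun l => F l (s l)))
    (h₂ : ∀ s : Fin ℓ → ℝ,
      (P {ω | ∀ l, S ω l ≤ s l}).toReal = C₂ (fun l => F l (s l))) :
    ∀ u : Fin ℓ → ℝ, (∀ l, u l ∈ Set.Ioo (0 : ℝ) 1) → C₁ u = C₂ u := by
  intro u hu
  have hF_onto : ∀ l, ∃ t, F l t = u l := fun l => by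
    have hS_l : AEMeasurable (fun ω => S ω l) P := ((measurable_pi_apply l).comp hS).aemeasurable
    have := Measure.isProbabilityMeasure_map hS_l
    have hF_cdf : F l = cdf (P.map fun ω => S ω l) :=
      funext fun t => (hF l t).trans (cdf_map_apply P hS_l t).symm
    have hcont := hFcont l
    rw [hF_cdf] at hcont ⊢
    exact Ioo_subset_range_cdf _ hcont (hu l)
  choose s hs using hF_onto
  rw [← funext hs, ← h₁, h₂]

/-- Uniqueness part of Sklar's theorem: when the marginal cdfs are continuous,
any two copulas representing the joint cdf agree on `(0,1)^ℓ`. -/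
theorem sklar_uniqueness
    {Ω : Type*} [MeasurableSpace Ω] (P : Measure Ω) [IsProbabilityMeasure P]
    (ℓ : ℕ) (hℓ : 1 ≤ ℓ)
    (S : Ω → Fin ℓ → ℝ) (hS : Measurable S)
    (F : Fin ℓ → ℝ → ℝ)
    (hF : ∀ l t, F l t = (P {ω | S ω l ≤ t}).toReal)
    (hFcont : ∀ l, Continuous (F l))
    (C₁ C₂ : (Fin ℓ → ℝ) → ℝ)
    (h₁ : ∀ s : Fin ℓ → ℝ,
      (P {ω | ∀ l, S ω l ≤ s l}).toReal = C₁ (fun l => F l (s l)))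
    (h₂ : ∀ s : Fin ℓ → ℝ,
      (P {ω | ∀ l, S ω l ≤ s l}).toReal = C₂ (fun l => F l (s l))) :
    ∀ u : Fin ℓ → ℝ, (∀ l, u l ∈ Set.Ioo (0 : ℝ) 1) → C₁ u = C₂ u :=
  sklar_uniqueness_general P ℓ S hS F hF hFcont C₁ C₂ h₁ h₂
end
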